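/- Classification of lines in the Lie algebra of lower triangular 2×2 real matrices: let X = E₂₁ (the matrix with 1 in position (2,1) and 0 elsewhere) and Y = E₂₂. For every one-dimensional subspace ℓ of the space of lower triangular 2×2 real matrices, there exists an invertible lower triangular g ∈ GL(2,ℝ) such that g ℓ g⁻¹ is exactly one of: ℝ·(λI + Y) for a unique λ ∈ ℝ; ℝ·X; ℝ·(I + X); or ℝ·I. These representatives are pairwise non-conjugate under invertible lower triangular matrices. -/

import Mathlib

/-!
Conjugating a lower triangular matrix `[[a, 0], [c, d]]` by `[[p, 0], [q, r]]` gives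
`[[a, 0], [(q (a - d) + r c) / p, d]]`. Hence the diagonal is invariant, up to the scalar relating
the two lines. If `a ≠ d`, choosing `q` kills the `(2,1)` entry and the line is `ℝ·(λI + Y)` with
`λ = a / (d - a)`, determined by the ratio `a : d`. If `a = d`, the `(2,1)` entry is only rescaled
by `r / p`, so whether it vanishes is a further invariant; it separates `ℝ·X`, `ℝ·(I + X)` and `ℝ·I`.
-/

open Matrix

noncomputable def X : Matrix (Fin 2) (Fin 2) ℝ := !![0, 0; 1, 0]

noncomputable def Y : Matrix (Fin 2) (Fin 2) ℝ := !![0, 0; 0, 1]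

/-- The line ℝ·A in M₂(ℝ). -/
def line (A : Matrix (Fin 2) (Fin 2) ℝ) : Set (Matrix (Fin 2) (Fin 2) ℝ) :=
  {B | ∃ t : ℝ, B = t • A}

/-- Conjugation of a set of matrices by g. -/
def mconj (g : Matrix (Fin 2) (Fin 2) ℝ) (S : Set (Matrix (Fin 2) (Fin 2) ℝ)) :
    Set (Matrix (Fin 2) (Fin 2) ℝ) :=
  (fun A => g * A * g⁻¹) '' S

/-- g is an invertible lower triangular matrix. -/
def lowerUnit (g : Matrix (Fin 2) (Fin 2) ℝ) : Prop := IsUnit g ∧ g 0 1 = 0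

section LowerTriangular

variable {K : Type*} [Field K]

lemma inv_lower_fin_two {p r : K} (q : K) (hp : p ≠ 0) (hr : r ≠ 0) :
    (!![p, 0; q, r])⁻¹ = !![p⁻¹, 0; -q / (p * r), r⁻¹] := by
  apply inv_eq_right_inv
  ext i j
  fin_cases i <;> fin_cases j <;> simp [hp, hr]
  field_simp
  ring

lemma conj_lower_fin_two {p r : K} (q : K) (hp : p ≠ 0) (hr : r ≠ 0) (a c d : K) :
    !![p, 0; q, r] * !![a, 0; c, d] * (!![p, 0; q, r])⁻¹ =
      !![a, 0; (q * (a - d) + r * c) / p, d] := by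
  rw [inv_lower_fin_two q hp hr]
  ext i j
  fin_cases i <;> fin_cases j <;> simp
  all_goals field_simp
  ring

lemma eta_lower_fin_two {A : Matrix (Fin 2) (Fin 2) K} (hA : A 0 1 = 0) :
    A = !![A 0 0, 0; A 1 0, A 1 1] := by
  rw [← hA]
  exact eta_fin_two A

end LowerTriangular

lemma lowerUnit_iff {g : Matrix (Fin 2) (Fin 2) ℝ} :
    lowerUnit g ↔ ∃ p q r : ℝ, p ≠ 0 ∧ r ≠ 0 ∧ g = !![p, 0; q, r] := by
  constructor
  · rintro ⟨hu, h01⟩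
    rw [isUnit_iff_isUnit_det, isUnit_iff_ne_zero, det_fin_two, h01, zero_mul, sub_zero] at hu
    exact ⟨g 0 0, g 1 0, g 1 1, left_ne_zero_of_mul hu, right_ne_zero_of_mul hu,
      eta_lower_fin_two h01⟩
  · rintro ⟨p, q, r, hp, hr, rfl⟩
    refine ⟨?_, rfl⟩
    rw [isUnit_iff_isUnit_det, isUnit_iff_ne_zero, det_fin_two_of]
    simp [hp, hr]

lemma lowerUnit_of_ne_zero {p r : ℝ} (q : ℝ) (hp : p ≠ 0) (hr : r ≠ 0) :
    lowerUnit !![p, 0; q, r] :=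
  lowerUnit_iff.2 ⟨p, q, r, hp, hr, rfl⟩

lemma lowerUnit_one : lowerUnit 1 :=
  ⟨isUnit_one, one_apply_ne zero_ne_one⟩

lemma mconj_one (S : Set (Matrix (Fin 2) (Fin 2) ℝ)) : mconj 1 S = S := by
  simp [mconj]

lemma mconj_line (g A : Matrix (Fin 2) (Fin 2) ℝ) :
    mconj g (line A) = line (g * A * g⁻¹) := by
  ext B
  constructor
  · rintro ⟨C, ⟨t, rfl⟩, rfl⟩
    exact ⟨t, by simp⟩
  · rintro ⟨t, rfl⟩
    exact ⟨t • A, ⟨t, rfl⟩, by simp⟩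

lemma line_eq_of_eq_smul {A B : Matrix (Fin 2) (Fin 2) ℝ} {c : ℝ} (hc : c ≠ 0)
    (h : A = c • B) : line A = line B := by
  subst h
  ext M
  constructor
  · rintro ⟨t, rfl⟩
    exact ⟨t * c, smul_smul t c B⟩
  · rintro ⟨t, rfl⟩
    exact ⟨t / c, by rw [smul_smul, div_mul_cancel₀ _ hc]⟩

lemma exists_eq_smul_of_line_eq {A B : Matrix (Fin 2) (Fin 2) ℝ} (h : line A = line B) :
    ∃ t : ℝ, A = t • B :=
  show A ∈ line B from h ▸ ⟨1, (one_smul ℝ A).symm⟩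

lemma Submodule.exists_coe_eq_line {ℓ : Submodule ℝ (Matrix (Fin 2) (Fin 2) ℝ)}
    (hℓ : Module.finrank ℝ ℓ = 1) : ∃ A ∈ ℓ, A ≠ 0 ∧ (ℓ : Set _) = line A := by
  obtain ⟨v, hv0, hv⟩ := finrank_eq_one_iff'.1 hℓ
  refine ⟨v, v.2, fun h => hv0 (Subtype.ext h), Set.ext fun B => ⟨fun hB => ?_, ?_⟩⟩
  · obtain ⟨t, ht⟩ := hv ⟨B, hB⟩
    exact ⟨t, congrArg Subtype.val ht.symm⟩
  · rintro ⟨t, rfl⟩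
    exact ℓ.smul_mem t v.2

lemma smul_one_add_Y (l : ℝ) : l • (1 : Matrix (Fin 2) (Fin 2) ℝ) + Y = !![l, 0; 0, l + 1] := by
  ext i j
  fin_cases i <;> fin_cases j <;> simp [Y]

lemma one_add_X : (1 : Matrix (Fin 2) (Fin 2) ℝ) + X = !![1, 0; 1, 1] := by
  ext i j
  fin_cases i <;> fin_cases j <;> simp [X]

lemma exists_of_mconj_line_lower_eq {g B : Matrix (Fin 2) (Fin 2) ℝ} (hg : lowerUnit g)
    {a c d : ℝ} (h : mconj g (line !![a, 0; c, d]) = line B) :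
    ∃ t : ℝ, a = t * B 0 0 ∧ d = t * B 1 1 ∧ (a = d → (c = 0 ↔ t * B 1 0 = 0)) := by
  obtain ⟨p, q, r, hp, hr, rfl⟩ := lowerUnit_iff.1 hg
  rw [mconj_line, conj_lower_fin_two q hp hr] at h
  obtain ⟨t, ht⟩ := exists_eq_smul_of_line_eq h
  have entry (i j : Fin 2) := congrFun (congrFun ht i) j
  refine ⟨t, by simpa using entry 0 0, by simpa using entry 1 1, fun had => ?_⟩
  rw [← (by simpa using entry 1 0 : (q * (a - d) + r * c) / p = t * B 1 0), had]
  simp [hp, hr]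

lemma eq_of_mconj_line_smul_one_add_Y_eq {g : Matrix (Fin 2) (Fin 2) ℝ} (hg : lowerUnit g)
    {l l' : ℝ} (h : mconj g (line (l • 1 + Y)) = line (l' • 1 + Y)) : l = l' := by
  rw [smul_one_add_Y, smul_one_add_Y] at h
  obtain ⟨t, h00, h11, -⟩ := exists_of_mconj_line_lower_eq hg h
  simp only [of_apply, cons_val', cons_val_zero, cons_val_one, empty_val', cons_val_fin_one]
    at h00 h11
  have ht : t = 1 := by linear_combination h00 - h11
  rw [h00, ht, one_mul]

lemma mconj_line_smul_one_add_Y_ne {g B : Matrix (Fin 2) (Fin 2) ℝ} (hg : lowerUnit g) (l : ℝ)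
    (hB : B 0 0 = B 1 1) : mconj g (line (l • 1 + Y)) ≠ line B := by
  intro h
  rw [smul_one_add_Y] at h
  obtain ⟨t, h00, h11, -⟩ := exists_of_mconj_line_lower_eq hg h
  rw [hB] at h00
  linarith

lemma mconj_line_lower_scalar_ne {g B : Matrix (Fin 2) (Fin 2) ℝ} (hg : lowerUnit g) (a : ℝ)
    {c : ℝ} (hc : c ≠ 0) (hB : B 1 0 = 0) : mconj g (line !![a, 0; c, a]) ≠ line B := by
  intro h
  obtain ⟨t, -, -, h10⟩ := exists_of_mconj_line_lower_eq hg h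
  exact hc ((h10 rfl).2 (by rw [hB, mul_zero]))

lemma mconj_line_lower_nilpotent_ne {g B : Matrix (Fin 2) (Fin 2) ℝ} (hg : lowerUnit g)
    {c : ℝ} (hc : c ≠ 0) (hB : B 0 0 ≠ 0) : mconj g (line !![0, 0; c, 0]) ≠ line B := by
  intro h
  obtain ⟨t, h00, -, h10⟩ := exists_of_mconj_line_lower_eq hg h
  have ht : t = 0 := (mul_eq_zero.1 h00.symm).resolve_right hB
  exact hc ((h10 rfl).2 (by rw [ht, zero_mul]))

lemma mconj_line_lower_of_ne {a d : ℝ} (c : ℝ) (had : a ≠ d) :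
    mconj !![1, 0; c / (d - a), 1] (line !![a, 0; c, d]) = line ((a / (d - a)) • 1 + Y) := by
  have hda : d - a ≠ 0 := sub_ne_zero.2 had.symm
  rw [mconj_line, conj_lower_fin_two _ one_ne_zero one_ne_zero, smul_one_add_Y]
  refine line_eq_of_eq_smul hda ?_
  ext i j
  fin_cases i <;> fin_cases j <;> simp <;> field_simp <;> ring

lemma mconj_line_lower_of_eq {a c : ℝ} (ha : a ≠ 0) (hc : c ≠ 0) :
    mconj !![1, 0; 0, a / c] (line !![a, 0; c, a]) = line (1 + X) := by
  rw [mconj_line, conj_lower_fin_two _ one_ne_zero (div_ne_zero ha hc), one_add_X]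
  refine line_eq_of_eq_smul ha ?_
  ext i j
  fin_cases i <;> fin_cases j <;> simp [hc]

lemma line_lower_nilpotent {c : ℝ} (hc : c ≠ 0) : line !![0, 0; c, 0] = line X :=
  line_eq_of_eq_smul hc (by ext i j; fin_cases i <;> fin_cases j <;> simp [X])

lemma line_lower_scalar {a : ℝ} (ha : a ≠ 0) : line !![a, 0; 0, a] = line 1 :=
  line_eq_of_eq_smul ha (by ext i j; fin_cases i <;> fin_cases j <;> simp)

lemma exists_lowerUnit_mconj_line_eq {a c d : ℝ} (hA : !![a, 0; c, d] ≠ 0) :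
    ∃ g, lowerUnit g ∧
      ((∃ l : ℝ, mconj g (line !![a, 0; c, d]) = line (l • 1 + Y)) ∨
        mconj g (line !![a, 0; c, d]) = line X ∨
        mconj g (line !![a, 0; c, d]) = line (1 + X) ∨
        mconj g (line !![a, 0; c, d]) = line 1) := by
  rcases ne_or_eq a d with had | rfl
  · exact ⟨_, lowerUnit_of_ne_zero _ one_ne_zero one_ne_zero,
      Or.inl ⟨_, mconj_line_lower_of_ne c had⟩⟩
  rcases eq_or_ne a 0 with rfl | ha
  · have hc : c ≠ 0 := by
      rintro rfl
      exact hA (eta_fin_two 0).symm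
    exact ⟨1, lowerUnit_one, Or.inr (Or.inl (by rw [mconj_one, line_lower_nilpotent hc]))⟩
  rcases eq_or_ne c 0 with rfl | hc
  · exact ⟨1, lowerUnit_one, Or.inr (Or.inr (Or.inr (by rw [mconj_one, line_lower_scalar ha])))⟩
  exact ⟨_, lowerUnit_of_ne_zero 0 one_ne_zero (div_ne_zero ha hc),
    Or.inr (Or.inr (Or.inl (mconj_line_lower_of_eq ha hc)))⟩

/-- every line of lower triangular 2×2 matrices is conjugate, by an
invertible lower triangular matrix, to one of ℝ·(λI+Y), ℝ·X, ℝ·(I+X), ℝ·I, and these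
representatives are pairwise non-conjugate. -/
theorem stmt16 :
    (∀ ℓ : Submodule ℝ (Matrix (Fin 2) (Fin 2) ℝ),
      (∀ A ∈ ℓ, A 0 1 = 0) → Module.finrank ℝ ℓ = 1 →
      ∃ g : Matrix (Fin 2) (Fin 2) ℝ, lowerUnit g ∧
        ((∃ l : ℝ, mconj g (ℓ : Set (Matrix (Fin 2) (Fin 2) ℝ)) = line (l • 1 + Y)) ∨
          mconj g (ℓ : Set (Matrix (Fin 2) (Fin 2) ℝ)) = line X ∨
          mconj g (ℓ : Set (Matrix (Fin 2) (Fin 2) ℝ)) = line (1 + X) ∨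
          mconj g (ℓ : Set (Matrix (Fin 2) (Fin 2) ℝ)) = line 1)) ∧
    (∀ l l' : ℝ, l ≠ l' → ∀ g, lowerUnit g → mconj g (line (l • 1 + Y)) ≠ line (l' • 1 + Y)) ∧
    (∀ l : ℝ, ∀ g, lowerUnit g → mconj g (line (l • 1 + Y)) ≠ line X) ∧
    (∀ l : ℝ, ∀ g, lowerUnit g → mconj g (line (l • 1 + Y)) ≠ line (1 + X)) ∧
    (∀ l : ℝ, ∀ g, lowerUnit g → mconj g (line (l • 1 + Y)) ≠ line 1) ∧
    (∀ g, lowerUnit g → mconj g (line X) ≠ line (1 + X)) ∧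
    (∀ g, lowerUnit g → mconj g (line X) ≠ line 1) ∧
    (∀ g, lowerUnit g → mconj g (line (1 + X)) ≠ line 1) := by
  refine ⟨fun ℓ hlow hℓ => ?_, fun l l' hl g hg h => hl (eq_of_mconj_line_smul_one_add_Y_eq hg h),
    fun l g hg => mconj_line_smul_one_add_Y_ne hg l (by simp [X]),
    fun l g hg => mconj_line_smul_one_add_Y_ne hg l (by simp [X]),
    fun l g hg => mconj_line_smul_one_add_Y_ne hg l (by simp),
    fun g hg => mconj_line_lower_nilpotent_ne hg one_ne_zero (by simp [X]),
    fun g hg => mconj_line_lower_scalar_ne hg 0 one_ne_zero (by simp),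
    fun g hg => by rw [one_add_X]; exact mconj_line_lower_scalar_ne hg 1 one_ne_zero (by simp)⟩
  obtain ⟨A, hAℓ, hA0, hℓA⟩ := Submodule.exists_coe_eq_line hℓ
  rw [eta_lower_fin_two (hlow A hAℓ)] at hA0 hℓA
  rw [hℓA]
  exact exists_lowerUnit_mconj_line_eq hA0
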